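/- Let |φ₁⟩ and |φ₂⟩ be two unit vectors in a finite-dimensional Hilbert space H with ⟨φ₂|φ₁⟩ ≠ 0. Suppose U is a unitary operator on H ⊗ K such that U(|φ₁⟩ ⊗ |0⟩) = |φ₁⟩ ⊗ |a⟩ and U(|φ₂⟩ ⊗ |0⟩) = |φ₂⟩ ⊗ |b⟩ for unit vectors |a⟩, |b⟩, |0⟩ in K. Then |a⟩ = |b⟩. -/

import Mathlib

/-!
A unitary preserves inner products, and inner products factor over tensor products, so
`⟪φ₂, φ₁⟫ ⟪b, a⟫ = ⟪φ₂, φ₁⟫ ⟪z, z⟫ = ⟪φ₂, φ₁⟫`. Cancelling the nonzero overlap gives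
`⟪b, a⟫ = 1`, which for unit vectors is the equality case of Cauchy–Schwarz: `a = b`.
-/

/-- The tensor product of two vectors in finite-dimensional spaces, represented on the
product index set. -/
def tens {m k : ℕ} (φ : EuclideanSpace ℂ (Fin m)) (ψ : EuclideanSpace ℂ (Fin k)) :
    EuclideanSpace ℂ (Fin m × Fin k) :=
  WithLp.toLp 2 (fun p : Fin m × Fin k => φ p.1 * ψ p.2)

theorem inner_tens {m k : ℕ} (φ φ' : EuclideanSpace ℂ (Fin m))
    (ψ ψ' : EuclideanSpace ℂ (Fin k)) :
    inner ℂ (tens φ ψ) (tens φ' ψ') = inner ℂ φ φ' * inner ℂ ψ ψ' := by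
  simp only [tens, PiLp.inner_apply, RCLike.inner_apply, Fintype.sum_prod_type,
    Finset.sum_mul_sum, map_mul]
  exact Finset.sum_congr rfl fun _ _ => Finset.sum_congr rfl fun _ _ => by ring

theorem no_information_without_disturbance_general
    {dH dK : ℕ}
    (φ₁ φ₂ : EuclideanSpace ℂ (Fin dH)) (z a b : EuclideanSpace ℂ (Fin dK))
    (hz : ‖z‖ = 1) (ha : ‖a‖ = 1) (hb : ‖b‖ = 1)
    (hnonorth : (inner ℂ φ₂ φ₁ : ℂ) ≠ 0)
    (U : EuclideanSpace ℂ (Fin dH × Fin dK) ≃ₗᵢ[ℂ] EuclideanSpace ℂ (Fin dH × Fin dK))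
    (hU1 : U (tens φ₁ z) = tens φ₁ a)
    (hU2 : U (tens φ₂ z) = tens φ₂ b) :
    a = b := by
  have hzz : inner ℂ z z = (1 : ℂ) := by
    rw [inner_self_eq_norm_sq_to_K, hz]; norm_num
  have hoverlap : inner ℂ φ₂ φ₁ * inner ℂ b a = inner ℂ φ₂ φ₁ * (1 : ℂ) := by
    calc inner ℂ φ₂ φ₁ * inner ℂ b a
        = inner ℂ (U (tens φ₂ z)) (U (tens φ₁ z)) := by rw [hU1, hU2, inner_tens]
      _ = inner ℂ (tens φ₂ z) (tens φ₁ z) := U.inner_map_map _ _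
      _ = inner ℂ φ₂ φ₁ * (1 : ℂ) := by rw [inner_tens, hzz]
  exact ((inner_eq_one_iff_of_norm_eq_one hb ha).mp
    (mul_left_cancel₀ hnonorth hoverlap)).symm

/-- If a unitary `U` on `H ⊗ K` maps `φ₁ ⊗ |0⟩` to `φ₁ ⊗ a` and `φ₂ ⊗ |0⟩` to `φ₂ ⊗ b`
for nonorthogonal unit vectors `φ₁, φ₂`, then `a = b`. -/
theorem no_information_without_disturbance
    {dH dK : ℕ}
    (φ₁ φ₂ : EuclideanSpace ℂ (Fin dH)) (z a b : EuclideanSpace ℂ (Fin dK))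
    (hφ₁ : ‖φ₁‖ = 1) (hφ₂ : ‖φ₂‖ = 1)
    (hz : ‖z‖ = 1) (ha : ‖a‖ = 1) (hb : ‖b‖ = 1)
    (hnonorth : (inner ℂ φ₂ φ₁ : ℂ) ≠ 0)
    (U : EuclideanSpace ℂ (Fin dH × Fin dK) ≃ₗᵢ[ℂ] EuclideanSpace ℂ (Fin dH × Fin dK))
    (hU1 : U (tens φ₁ z) = tens φ₁ a)
    (hU2 : U (tens φ₂ z) = tens φ₂ b) :
    a = b :=
  no_information_without_disturbance_general φ₁ φ₂ z a b hz ha hb hnonorth U hU1 hU2
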